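/- Let (X, Y) be a complete hereditary cotorsion pair in an abelian category A and let A be an object of A and n ≥ 1 an integer. Then A has X-resolution dimension at most n if and only if Ext^{n+1}(A, Y) = 0 for every object Y ∈ Y. Consequently, X-resdim(A) = sup{ i ∈ ℕ : Ext^i(A, Y) ≠ 0 for some Y ∈ Y }. -/

import Mathlib

open CategoryTheory Limits

universe w v u

namespace PaperAB

variable {C : Type u} [Category.{v} C] [Abelian C] [HasExt.{w} C]

/-- Vanishing of `Ext^n(A, B)`. -/
def extZero (A B : C) (n : ℕ) : Prop := Subsingleton (Abelian.Ext A B n)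

/-- The right `Ext^1`-orthogonal class of a class `𝒳`. -/
def rightOrth (𝒳 : C → Prop) : C → Prop := fun B => ∀ A, 𝒳 A → extZero A B 1

/-- The left `Ext^1`-orthogonal class of a class `𝒴`. -/
def leftOrth (𝒴 : C → Prop) : C → Prop := fun A => ∀ B, 𝒴 B → extZero A B 1

/-- `f, g` form a short exact sequence `0 → A → B → D → 0`. -/
def IsSES {A B D : C} (f : A ⟶ B) (g : B ⟶ D) : Prop :=
  ∃ (zero : f ≫ g = 0), (ShortComplex.mk f g zero).ShortExact

/-- `(𝒳, 𝒴)` is a cotorsion pair. -/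
structure CotorsionPair (𝒳 𝒴 : C → Prop) : Prop where
  eqLeft : ∀ A, 𝒳 A ↔ leftOrth 𝒴 A
  eqRight : ∀ B, 𝒴 B ↔ rightOrth 𝒳 B

/-- Completeness of a pair of classes `(𝒳, 𝒴)`: every object admits a special
`𝒳`-precover and a special `𝒴`-preenvelope. -/
def Complete (𝒳 𝒴 : C → Prop) : Prop :=
  ∀ A : C,
    (∃ (Y X : C) (f : Y ⟶ X) (g : X ⟶ A), IsSES f g ∧ 𝒳 X ∧ 𝒴 Y) ∧
    (∃ (Y X : C) (f : A ⟶ Y) (g : Y ⟶ X), IsSES f g ∧ 𝒴 Y ∧ 𝒳 X)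

/-- Heredity: `Ext^n(𝒳, 𝒴) = 0` for all `n ≥ 1`. -/
def Hereditary (𝒳 𝒴 : C → Prop) : Prop :=
  ∀ A B, 𝒳 A → 𝒴 B → ∀ n, 1 ≤ n → extZero A B n

/-- Complete hereditary cotorsion pair. -/
structure CHCP (𝒳 𝒴 : C → Prop) : Prop where
  cotorsion : CotorsionPair 𝒳 𝒴
  complete : Complete 𝒳 𝒴
  hereditary : Hereditary 𝒳 𝒴

/-- `ResDimLE 𝒳 A n` : there exists an exact sequence
`0 → X n → ⋯ → X 0 → A → 0` with all `X i ∈ 𝒳`. -/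
def ResDimLE (𝒳 : C → Prop) (A : C) (n : ℕ) : Prop :=
  ∃ (X : ℕ → C) (d : ∀ i, X (i + 1) ⟶ X i) (ε : X 0 ⟶ A),
    (∀ i, i ≤ n → 𝒳 (X i)) ∧ (∀ i, n < i → IsZero (X i)) ∧ Epi ε ∧
    (∃ (zero : d 0 ≫ ε = 0), (ShortComplex.mk (d 0) ε zero).Exact) ∧
    (∀ i, ∃ (zero : d (i + 1) ≫ d i = 0),
      (ShortComplex.mk (d (i + 1)) (d i) zero).Exact)

/-- Objects of finite `𝒳`-resolution dimension (the class `X̂`). -/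
def FinResDim (𝒳 : C → Prop) (A : C) : Prop := ∃ n, ResDimLE 𝒳 A n

/-- The `𝒳`-resolution dimension of `A`, in `ℕ∞`. -/
noncomputable def ResDim (𝒳 : C → Prop) (A : C) : ℕ∞ :=
  sInf {m : ℕ∞ | ∃ n : ℕ, m = (n : ℕ∞) ∧ ResDimLE 𝒳 A n}

/-- The intersection of two classes. -/
def Inter (𝒳 𝒴 : C → Prop) : C → Prop := fun A => 𝒳 A ∧ 𝒴 A

def ClosedUnderExtensions (𝒲 : C → Prop) : Prop :=
  ∀ ⦃A B D : C⦄ (f : A ⟶ B) (g : B ⟶ D), IsSES f g → 𝒲 A → 𝒲 D → 𝒲 B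

def ClosedUnderKernels (𝒲 : C → Prop) : Prop :=
  ∀ ⦃A B D : C⦄ (f : A ⟶ B) (g : B ⟶ D), IsSES f g → 𝒲 B → 𝒲 D → 𝒲 A

def ClosedUnderCokernels (𝒲 : C → Prop) : Prop :=
  ∀ ⦃A B D : C⦄ (f : A ⟶ B) (g : B ⟶ D), IsSES f g → 𝒲 A → 𝒲 B → 𝒲 D

def ClosedUnderSummands (𝒲 : C → Prop) : Prop :=
  ∀ ⦃A B : C⦄ (i : A ⟶ B) (p : B ⟶ A), i ≫ p = 𝟙 A → 𝒲 B → 𝒲 A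

/-- A class is thick if it is closed under direct summands and has the
two-out-of-three property on short exact sequences. -/
def IsThick (𝒲 : C → Prop) : Prop :=
  ClosedUnderSummands 𝒲 ∧ ClosedUnderExtensions 𝒲 ∧
    ClosedUnderKernels 𝒲 ∧ ClosedUnderCokernels 𝒲

/-- A class is left thick if it is closed under direct summands, extensions and
kernels of epimorphisms. -/
def LeftThick (𝒲 : C → Prop) : Prop :=
  ClosedUnderSummands 𝒲 ∧ ClosedUnderExtensions 𝒲 ∧ ClosedUnderKernels 𝒲

/-- A class is right thick if it is closed under direct summands, extensions and
cokernels of monomorphisms. -/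
def RightThick (𝒲 : C → Prop) : Prop :=
  ClosedUnderSummands 𝒲 ∧ ClosedUnderExtensions 𝒲 ∧ ClosedUnderCokernels 𝒲

/-- `ω` is a cogenerator for `𝒳`. -/
def IsCogeneratorFor (ω 𝒳 : C → Prop) : Prop :=
  (∀ A, ω A → 𝒳 A) ∧
  ∀ A, 𝒳 A → ∃ (W A' : C) (f : A ⟶ W) (g : W ⟶ A'), IsSES f g ∧ ω W ∧ 𝒳 A'

/-- `ω` is an injective cogenerator for `𝒳`. -/
def IsInjCogeneratorFor (ω 𝒳 : C → Prop) : Prop :=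
  IsCogeneratorFor ω 𝒳 ∧ ∀ A W, 𝒳 A → ω W → ∀ n, 1 ≤ n → extZero A W n

/-- A left weak Auslander–Buchweitz context `(𝒳, 𝒴, ω)`. -/
structure LeftWeakABContext (𝒳 𝒴 ω : C → Prop) : Prop where
  ab1 : LeftThick 𝒳
  ab2 : RightThick 𝒴
  ab2' : ∀ A, 𝒴 A → FinResDim 𝒳 A
  ab3 : (∀ A, ω A ↔ 𝒳 A ∧ 𝒴 A) ∧ IsInjCogeneratorFor ω 𝒳

/-- A left Auslander–Buchweitz context: a left weak AB-context in which every
object has finite `𝒳`-resolution dimension. -/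
structure LeftABContext (𝒳 𝒴 ω : C → Prop) extends LeftWeakABContext 𝒳 𝒴 ω : Prop where
  hat_all : ∀ A : C, FinResDim 𝒳 A

end PaperAB

/-! If `0 → K → X₀ → A → 0` is exact with `X₀ ∈ 𝒳`, heredity makes the long exact `Ext(-, Y)`
sequence identify the vanishing of `Ext^{i+1}(A, Y)` with that of `Ext^i(K, Y)` for `i ≥ 1`,
`Y ∈ 𝒴`. Cutting off the bottom term of an `𝒳`-resolution therefore lowers both sides of the
equivalence by one; conversely a special `𝒳`-precover of `A` supplies such a sequence, and in
degree `0` the condition `Ext^1(A, 𝒴) = 0` says `A ∈ 𝒳` because `(𝒳, 𝒴)` is a cotorsion pair.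
Hence `ResDimLE 𝒳 A n` holds exactly when `n` bounds the degrees `i` with `Ext^i(A, Y) ≠ 0`
for some `Y ∈ 𝒴`, and the least such bound in `ℕ∞` is the supremum of those degrees. -/

namespace PaperAB

section

variable {C : Type u} [Category.{v} C] [Abelian C]

lemma exact_mk_comp_mono_iff {X Y Z Z' : C} (f : X ⟶ Y) (g : Y ⟶ Z) (m : Z ⟶ Z') [Mono m]
    (w : f ≫ g = 0) :
    (ShortComplex.mk f (g ≫ m) (by rw [reassoc_of% w, zero_comp])).Exact ↔
      (ShortComplex.mk f g w).Exact := by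
  let φ : ShortComplex.mk f g w ⟶ ShortComplex.mk f (g ≫ m) (by rw [reassoc_of% w, zero_comp]) :=
    ⟨𝟙 X, 𝟙 Y, m, by simp, by simp⟩
  have : Mono φ.τ₃ := ‹Mono m›
  exact (ShortComplex.exact_iff_of_epi_of_isIso_of_mono φ).symm

lemma exact_mk_epi_comp {X' X Y Z : C} (e : X' ⟶ X) [Epi e] {f : X ⟶ Y} {g : Y ⟶ Z}
    {w : f ≫ g = 0} (h : (ShortComplex.mk f g w).Exact) :
    (ShortComplex.mk (e ≫ f) g (by rw [Category.assoc, w, comp_zero])).Exact := by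
  let φ : ShortComplex.mk (e ≫ f) g (by rw [Category.assoc, w, comp_zero]) ⟶
      ShortComplex.mk f g w :=
    ⟨e, 𝟙 Y, 𝟙 Z, by simp, by simp⟩
  have : Epi φ.τ₁ := ‹Epi e›
  exact (ShortComplex.exact_iff_of_epi_of_isIso_of_mono φ).2 h

open ZeroObject in
lemma resDimLE_zero_of_mem {𝒳 : C → Prop} {A : C} (hA : 𝒳 A) : ResDimLE 𝒳 A 0 := by
  refine ⟨fun i => match i with | 0 => A | _ + 1 => 0,
    fun _ => 0, 𝟙 A, ?_, ?_, inferInstance, ⟨zero_comp, ?_⟩, fun _ => ⟨zero_comp, ?_⟩⟩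
  · rintro (_ | i) hi
    · exact hA
    · omega
  · rintro (_ | i) hi
    · omega
    · exact isZero_zero C
  · exact (ShortComplex.exact_iff_mono _ rfl).2 inferInstance
  · exact ShortComplex.exact_of_isZero_X₂ _ (isZero_zero C)

lemma exists_iso_of_resDimLE_zero {𝒳 : C → Prop} {A : C} (hA : ResDimLE 𝒳 A 0) :
    ∃ X, 𝒳 X ∧ Nonempty (X ≅ A) := by
  obtain ⟨X, d, ε, hmem, hzero, hε, ⟨_, hexact⟩, -⟩ := hA
  have : Mono ε := (ShortComplex.exact_iff_mono _ ((hzero 1 one_pos).eq_of_src _ _)).1 hexact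
  have : IsIso ε := isIso_of_mono_of_epi ε
  exact ⟨X 0, hmem 0 le_rfl, ⟨asIso ε⟩⟩

lemma resDimLE_succ_of_shortExact {𝒳 : C → Prop} {K X₀ A : C} {f : K ⟶ X₀} {g : X₀ ⟶ A}
    (hfg : IsSES f g) (hX₀ : 𝒳 X₀) {n : ℕ} (hK : ResDimLE 𝒳 K n) :
    ResDimLE 𝒳 A (n + 1) := by
  obtain ⟨X, d, ε, hmem, hzero, hε, ⟨w₀, hexact₀⟩, hexact⟩ := hK
  obtain ⟨w, hS⟩ := hfg
  have := hS.mono_f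
  refine ⟨fun i => match i with | 0 => X₀ | j + 1 => X j,
    fun i => match i with | 0 => ε ≫ f | j + 1 => d j, g, ?_, ?_, hS.epi_g,
    ⟨_, exact_mk_epi_comp ε hS.exact⟩, ?_⟩
  · rintro (_ | i) hi
    · exact hX₀
    · exact hmem i (by omega)
  · rintro (_ | i) hi
    · omega
    · exact hzero i (by omega)
  · rintro (_ | i)
    · exact ⟨_, (exact_mk_comp_mono_iff (d 0) ε f w₀).2 hexact₀⟩
    · exact hexact i

lemma exists_shortExact_of_resDimLE_succ {𝒳 : C → Prop} {A : C} {n : ℕ}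
    (hA : ResDimLE 𝒳 A (n + 1)) :
    ∃ (K X₀ : C) (f : K ⟶ X₀) (g : X₀ ⟶ A), IsSES f g ∧ 𝒳 X₀ ∧ ResDimLE 𝒳 K n := by
  obtain ⟨X, d, ε, hmem, hzero, hε, ⟨w₀, hexact₀⟩, hexact⟩ := hA
  obtain ⟨w₁, hexact₁⟩ := hexact 0
  have hw : d 1 ≫ kernel.lift ε (d 0) w₀ = 0 := by
    rw [← cancel_mono (kernel.ι ε)]
    simp [w₁]
  refine ⟨kernel ε, X 0, kernel.ι ε, ε,
    ⟨kernel.condition ε, { exact := ShortComplex.exact_kernel ε }⟩, hmem 0 (Nat.zero_le _),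
    fun i => X (i + 1), fun i => d (i + 1), kernel.lift ε (d 0) w₀,
    fun i hi => hmem (i + 1) (by omega), fun i hi => hzero (i + 1) (by omega),
    hexact₀.epi_kernelLift, ⟨hw, ?_⟩, fun i => hexact (i + 1)⟩
  refine (exact_mk_comp_mono_iff _ _ (kernel.ι ε) hw).1 ?_
  simpa using hexact₁

variable [HasExt.{w} C]

open Abelian

lemma extZero_iff_forall_eq_zero {A B : C} {n : ℕ} :
    extZero A B n ↔ ∀ x : Ext A B n, x = 0 :=
  ⟨fun h x => @Subsingleton.elim _ h x 0, fun h => ⟨fun x y => by rw [h x, h y]⟩⟩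

lemma extZero_of_iso {X A B : C} (e : X ≅ A) {n : ℕ} (h : extZero X B n) :
    extZero A B n := by
  have : Subsingleton (Ext X B n) := h
  have hsurj : Function.Surjective
      (fun x : Ext X B n => (Ext.mk₀ e.inv).comp x (zero_add n)) := fun y =>
    ⟨(Ext.mk₀ e.hom).comp y (zero_add n), by simp⟩
  exact hsurj.subsingleton

lemma extZero_X₃_of_shortExact {B : C} {S : ShortComplex C} (hS : S.ShortExact) {m : ℕ}
    (h₁ : extZero S.X₁ B m) (h₂ : extZero S.X₂ B (m + 1)) : extZero S.X₃ B (m + 1) := by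
  have : Subsingleton (Ext S.X₁ B m) := h₁
  have : Subsingleton (Ext S.X₂ B (m + 1)) := h₂
  refine extZero_iff_forall_eq_zero.2 fun x₃ => ?_
  obtain ⟨x₁, rfl⟩ := Ext.contravariant_sequence_exact₃ hS B x₃ (Subsingleton.elim _ _)
    (add_comm _ _)
  rw [Subsingleton.elim x₁ 0, Ext.comp_zero]

lemma extZero_X₁_of_shortExact {B : C} {S : ShortComplex C} (hS : S.ShortExact) {m : ℕ}
    (h₂ : extZero S.X₂ B m) (h₃ : extZero S.X₃ B (m + 1)) : extZero S.X₁ B m := by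
  have : Subsingleton (Ext S.X₂ B m) := h₂
  have : Subsingleton (Ext S.X₃ B (m + 1)) := h₃
  refine extZero_iff_forall_eq_zero.2 fun x₁ => ?_
  obtain ⟨x₂, rfl⟩ := Ext.contravariant_sequence_exact₁ hS B x₁ (add_comm _ _)
    (Subsingleton.elim _ _)
  rw [Subsingleton.elim x₂ 0, Ext.comp_zero]

lemma extZero_of_resDimLE {𝒳 𝒴 : C → Prop} (h𝒳𝒴 : Hereditary 𝒳 𝒴) {n : ℕ} {A : C}
    (hA : ResDimLE 𝒳 A n) {B : C} (hB : 𝒴 B) {m : ℕ} (hm : n < m) : extZero A B m := by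
  induction n generalizing A m with
  | zero =>
    obtain ⟨X, hX, ⟨e⟩⟩ := exists_iso_of_resDimLE_zero hA
    exact extZero_of_iso e (h𝒳𝒴 X B hX hB m hm)
  | succ n ih =>
    obtain ⟨K, X₀, f, g, ⟨_, hS⟩, hX₀, hK⟩ := exists_shortExact_of_resDimLE_succ hA
    obtain ⟨k, rfl⟩ : ∃ k, m = k + 1 := ⟨m - 1, by omega⟩
    exact extZero_X₃_of_shortExact hS (ih hK (by omega)) (h𝒳𝒴 X₀ B hX₀ hB _ (by omega))

lemma resDimLE_of_extZero {𝒳 𝒴 : C → Prop} (h : CHCP 𝒳 𝒴) {n : ℕ} {A : C}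
    (hA : ∀ B, 𝒴 B → extZero A B (n + 1)) : ResDimLE 𝒳 A n := by
  induction n generalizing A with
  | zero => exact resDimLE_zero_of_mem ((h.cotorsion.eqLeft A).2 hA)
  | succ n ih =>
    obtain ⟨⟨Y, X, f, g, ⟨w, hS⟩, hX, -⟩, -⟩ := h.complete A
    have hYext : ∀ B, 𝒴 B → extZero Y B (n + 1) := fun B hB =>
      extZero_X₁_of_shortExact hS (h.hereditary X B hX hB _ (by omega)) (hA B hB)
    exact resDimLE_succ_of_shortExact ⟨w, hS⟩ hX (ih hYext)

lemma resDimLE_iff_forall_extZero {𝒳 𝒴 : C → Prop} (h : CHCP 𝒳 𝒴) (A : C) (n : ℕ) :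
    ResDimLE 𝒳 A n ↔ ∀ B, 𝒴 B → extZero A B (n + 1) :=
  ⟨fun hA _ hB => extZero_of_resDimLE h.hereditary hA hB n.lt_succ_self,
    resDimLE_of_extZero h⟩

lemma resDimLE_iff_mem_upperBounds {𝒳 𝒴 : C → Prop} (h : CHCP 𝒳 𝒴) (A : C) (n : ℕ) :
    ResDimLE 𝒳 A n ↔ n ∈ upperBounds {i : ℕ | ∃ B, 𝒴 B ∧ ¬ extZero A B i} := by
  refine ⟨fun hA i ⟨B, hB, hne⟩ => ?_, fun hn => (resDimLE_iff_forall_extZero h A n).2 ?_⟩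
  · by_contra hlt
    exact hne (extZero_of_resDimLE h.hereditary hA hB (not_le.1 hlt))
  · intro B hB
    by_contra hne
    exact n.not_succ_le_self (hn ⟨B, hB, hne⟩)

end

lemma _root_.ENat.sInf_natCast_eq_iSup {S : Set ℕ} {P : ℕ → Prop}
    (hP : ∀ n, P n ↔ n ∈ upperBounds S) :
    sInf {m : ℕ∞ | ∃ n : ℕ, m = n ∧ P n} = ⨆ i ∈ S, (i : ℕ∞) := by
  refine le_antisymm ?_ (le_sInf ?_)
  · rcases eq_or_ne (⨆ i ∈ S, (i : ℕ∞)) ⊤ with htop | htop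
    · exact htop ▸ le_top
    obtain ⟨k, hk⟩ := ENat.ne_top_iff_exists.1 htop
    refine sInf_le ⟨k, hk.symm, (hP k).2 fun i hi => ?_⟩
    have hik : (i : ℕ∞) ≤ k := by
      rw [hk]
      exact le_iSup₂ (f := fun (i : ℕ) (_ : i ∈ S) => (i : ℕ∞)) i hi
    exact_mod_cast hik
  · rintro _ ⟨n, rfl, hn⟩
    exact iSup₂_le fun i hi => by exact_mod_cast (hP n).1 hn hi

theorem statement1_general {C : Type u} [Category.{v} C] [Abelian C] [HasExt.{w} C]
    {𝒳 𝒴 : C → Prop} (h : CHCP 𝒳 𝒴) (A : C) (n : ℕ) :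
    (ResDimLE 𝒳 A n ↔ ∀ B, 𝒴 B → extZero A B (n + 1)) ∧
    ResDim 𝒳 A = ⨆ i ∈ {i : ℕ | ∃ B, 𝒴 B ∧ ¬ extZero A B i}, (i : ℕ∞) :=
  ⟨resDimLE_iff_forall_extZero h A n,
    ENat.sInf_natCast_eq_iSup (resDimLE_iff_mem_upperBounds h A)⟩

/-- For a complete hereditary cotorsion pair `(𝒳, 𝒴)` and `n ≥ 1`:
`A` has `𝒳`-resolution dimension at most `n` iff `Ext^{n+1}(A, Y) = 0` for all
`Y ∈ 𝒴`; consequently the `𝒳`-resolution dimension of `A` is the supremum of the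
`i` such that `Ext^i(A, Y) ≠ 0` for some `Y ∈ 𝒴`. -/
theorem statement1 {C : Type u} [Category.{v} C] [Abelian C] [HasExt.{w} C]
    {𝒳 𝒴 : C → Prop} (h : CHCP 𝒳 𝒴) (A : C) (n : ℕ) (hn : 1 ≤ n) :
    (ResDimLE 𝒳 A n ↔ ∀ B, 𝒴 B → extZero A B (n + 1)) ∧
    ResDim 𝒳 A = ⨆ i ∈ {i : ℕ | ∃ B, 𝒴 B ∧ ¬ extZero A B i}, (i : ℕ∞) :=
  statement1_general h A n

end PaperAB
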